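/- Let R be a commutative ring and A an associative unital R-algebra such that the multiplication map μ: A⊗_R A → A admits an A-bimodule right inverse. Let N be a left A-module and k ≥ 0. Suppose there exists an exact complex of left A-modules ⋯ → P₁ → P₀ → N → 0 in which every P_n is projective as an R-module, and suppose the projective dimension of N as an R-module is at most k. Then the projective dimension of N as a left A-module is at most k. -/

import Mathlib

/-!
The element `e = σ 1` satisfies `μ e = 1` and `a • e = e • a`. Writing `e = ∑ xᵢ ⊗ yᵢ`, the map
`m ↦ ∑ xᵢ ⊗ yᵢ • m` is an `A`-linear section of the action map `A ⊗[R] M → M`, so every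
`A`-module that is projective over `R` is a direct summand of the `A`-projective module
`A ⊗[R] M`. Induct on `k`. For `k = 0` this is the whole argument. Otherwise let `K` be the kernel
of `P₀ → N`. Dimension shifting over `R` (with `P₀` projective over `R`) gives `pd_R K ≤ k - 1`,
`K` is resolved by `⋯ → P₂ → P₁`, and `P₀` is `A`-projective, so `pd_A N ≤ pd_A K + 1 ≤ k`.
Over `R` we use Mathlib's Ext-based `HasProjectiveDimensionLE`, where dimension shifting along a
short exact sequence with projective middle term is available.
-/

open TensorProduct

/-- `ProjDimLE S N k`: the projective dimension of the `S`-module `N` is at most `k`, i.e.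
`N` admits a projective resolution `0 → Q_k → ⋯ → Q_0 → N → 0` of length `k`
(encoded as an exact complex `⋯ → Q_1 → Q_0 → N → 0` with all `Q_n` projective and
`Q_n = 0` for `n > k`). -/
def ProjDimLE (S : Type) [Ring S] (N : Type) [AddCommGroup N] [Module S N] (k : ℕ) : Prop :=
  ∃ (Q : ℕ → ModuleCat.{0} S) (d : ∀ n : ℕ, (Q (n + 1) : Type) →ₗ[S] (Q n : Type))
    (π : (Q 0 : Type) →ₗ[S] N),
    (∀ n, Module.Projective S (Q n)) ∧
    (∀ n, k < n → ∀ x : Q n, x = 0) ∧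
    Function.Surjective π ∧
    (∀ x : Q 0, π x = 0 ↔ ∃ y, d 0 y = x) ∧
    (∀ (n : ℕ) (x : Q (n + 1)), d n x = 0 ↔ ∃ y, d (n + 1) y = x)

open CategoryTheory

section Resolution

variable {S : Type} [Ring S] {N : Type} [AddCommGroup N] [Module S N]

structure IsResolution {Q : ℕ → ModuleCat.{0} S}
    (d : ∀ n : ℕ, (Q (n + 1) : Type) →ₗ[S] (Q n : Type)) (π : (Q 0 : Type) →ₗ[S] N) : Prop where
  surjective : Function.Surjective π
  exact_zero : ∀ x : Q 0, π x = 0 ↔ ∃ y, d 0 y = x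
  exact_succ : ∀ (n : ℕ) (x : Q (n + 1)), d n x = 0 ↔ ∃ y, d (n + 1) y = x

namespace IsResolution

variable {Q : ℕ → ModuleCat.{0} S} {d : ∀ n : ℕ, (Q (n + 1) : Type) →ₗ[S] (Q n : Type)}
  {π : (Q 0 : Type) →ₗ[S] N}

def toKer (h : IsResolution d π) : (Q 1 : Type) →ₗ[S] LinearMap.ker π :=
  (d 0).codRestrict _ fun y => (h.exact_zero _).2 ⟨y, rfl⟩

theorem shift (h : IsResolution d π) :
    IsResolution (Q := fun n => Q (n + 1)) (fun n => d (n + 1)) h.toKer where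
  surjective := by
    rintro ⟨x, hx⟩
    obtain ⟨y, rfl⟩ := (h.exact_zero x).1 hx
    exact ⟨y, rfl⟩
  exact_zero x := Subtype.ext_iff.trans (h.exact_succ 0 x)
  exact_succ n := h.exact_succ (n + 1)

end IsResolution

theorem projDimLE_iff_exists_isResolution (k : ℕ) : ProjDimLE S N k ↔
    ∃ (Q : ℕ → ModuleCat.{0} S) (d : ∀ n : ℕ, (Q (n + 1) : Type) →ₗ[S] (Q n : Type))
      (π : (Q 0 : Type) →ₗ[S] N),
      (∀ n, Module.Projective S (Q n)) ∧ (∀ n, k < n → ∀ x : Q n, x = 0) ∧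
        IsResolution d π :=
  ⟨fun ⟨Q, d, π, hQ, hk, hπ, h0, hs⟩ => ⟨Q, d, π, hQ, hk, hπ, h0, hs⟩,
    fun ⟨Q, d, π, hQ, hk, hπ, h0, hs⟩ => ⟨Q, d, π, hQ, hk, hπ, h0, hs⟩⟩

theorem projDimLE_zero_of_projective [Module.Projective S N] : ProjDimLE S N 0 := by
  refine (projDimLE_iff_exists_isResolution 0).2
    ⟨fun n => Nat.casesOn n (ModuleCat.of S N) fun _ => ModuleCat.of S PUnit, fun _ => 0,
      LinearMap.id, fun n => ?_, fun n hn x => ?_, Function.surjective_id, ?_, ?_⟩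
  · cases n
    · assumption
    · exact inferInstanceAs (Module.Projective S PUnit)
  · cases n
    · omega
    · rfl
  · exact fun x => by simp [eq_comm (a := x)]
  · exact fun _ _ => ⟨fun _ => ⟨0, rfl⟩, fun _ => rfl⟩

theorem projDimLE_succ_of_ker {P : Type} [AddCommGroup P] [Module S P] [Module.Projective S P]
    {π : P →ₗ[S] N} (hπ : Function.Surjective π) {k : ℕ}
    (h : ProjDimLE S (LinearMap.ker π) k) : ProjDimLE S N (k + 1) := by
  obtain ⟨Q, d, π', hQ, hk, hres⟩ := (projDimLE_iff_exists_isResolution k).1 h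
  refine (projDimLE_iff_exists_isResolution (k + 1)).2
    ⟨fun n => Nat.casesOn n (ModuleCat.of S P) Q,
      fun n => Nat.casesOn n ((LinearMap.ker π).subtype ∘ₗ π') d, π,
      fun n => ?_, fun n hn x => ?_, hπ, fun x => ?_, fun n x => ?_⟩
  · cases n
    · assumption
    · exact hQ _
  · cases n
    · omega
    · exact hk _ (by omega) x
  · constructor
    · intro hx
      obtain ⟨y, hy⟩ := hres.surjective ⟨x, hx⟩
      exact ⟨y, by simp [hy]⟩
    · rintro ⟨y, rfl⟩
      exact (π' y).2
  · cases n
    · exact Subtype.ext_iff.symm.trans (hres.exact_zero x)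
    · exact hres.exact_succ _ x

theorem Function.Exact.hasProjectiveDimensionLE_succ_iff {K P M : Type} [AddCommGroup K]
    [Module S K] [AddCommGroup P] [Module S P] [Module.Projective S P] [AddCommGroup M] [Module S M]
    {i : K →ₗ[S] P} {f : P →ₗ[S] M} (h : Function.Exact i f) (hi : Function.Injective i)
    (hf : Function.Surjective f) (k : ℕ) :
    HasProjectiveDimensionLE (ModuleCat.of S M) (k + 1) ↔
      HasProjectiveDimensionLE (ModuleCat.of S K) k :=
  (ModuleCat.shortComplex_shortExact (ModuleCat.shortComplexOfCompEqZero i f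
    h.linearMap_comp_eq_zero) h hi hf).hasProjectiveDimensionLT_X₃_iff k
    ((IsProjective.iff_projective P).1 ‹_›)

theorem ProjDimLE.hasProjectiveDimensionLE {k : ℕ} (h : ProjDimLE S N k) :
    HasProjectiveDimensionLE (ModuleCat.of S N) k := by
  induction k generalizing N with
  | zero =>
    obtain ⟨Q, d, π, hQ, hk, hres⟩ := (projDimLE_iff_exists_isResolution 0).1 h
    have hinj : Function.Injective π := by
      refine (injective_iff_map_eq_zero π).2 fun x hx => ?_
      obtain ⟨y, rfl⟩ := (hres.exact_zero x).1 hx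
      rw [hk 1 one_pos y, map_zero]
    have := hQ 0
    have := Module.Projective.of_equiv (LinearEquiv.ofBijective π ⟨hinj, hres.surjective⟩)
    exact (projective_iff_hasProjectiveDimensionLE_zero _).1
      ((IsProjective.iff_projective N).1 this)
  | succ k ih =>
    obtain ⟨Q, d, π, hQ, hk, hres⟩ := (projDimLE_iff_exists_isResolution (k + 1)).1 h
    have hker := ih ((projDimLE_iff_exists_isResolution k).2
      ⟨_, _, _, fun n => hQ (n + 1), fun n hn => hk (n + 1) (by omega), hres.shift⟩)
    have := hQ 0
    exact ((LinearMap.exact_subtype_ker_map π).hasProjectiveDimensionLE_succ_iff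
      (LinearMap.ker π).injective_subtype hres.surjective k).2 hker

end Resolution

section Separable

variable {R : Type} [CommRing R] {A : Type} [Ring A] [Algebra R A]

theorem LinearMap.rTensor_mulLeft_apply {M : Type} [AddCommGroup M] [Module R M] (a : A)
    (z : A ⊗[R] M) : LinearMap.rTensor M (LinearMap.mulLeft R a) z = a • z :=
  (TensorProduct.AlgebraTensorModule.smul_eq_lsmul_rTensor a z).symm

variable {M : Type} [AddCommGroup M] [Module R M] [Module A M] [IsScalarTower R A M]

variable (M) in
def actionMap : A ⊗[R] M →ₗ[A] M :=
  TensorProduct.AlgebraTensorModule.lift (LinearMap.toSpanSingleton A (M →ₗ[R] M) LinearMap.id)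

theorem actionMap_tmul (a : A) (m : M) : actionMap M (a ⊗ₜ[R] m) = a • m :=
  rfl

theorem actionMap_lTensor_smulRight (m : M) (z : A ⊗[R] A) :
    actionMap M (LinearMap.lTensor A (LinearMap.id.smulRight m) z) = LinearMap.mul' R A z • m := by
  induction z using TensorProduct.induction_on with
  | zero => simp
  | tmul x y => simp [actionMap_tmul, mul_smul]
  | add u v hu hv => simp only [map_add, add_smul, hu, hv]

structure IsSeparabilityIdempotent (e : A ⊗[R] A) : Prop where
  mul'_eq_one : LinearMap.mul' R A e = 1
  rTensor_mulLeft_eq_lTensor_mulRight (a : A) :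
    LinearMap.rTensor A (LinearMap.mulLeft R a) e = LinearMap.lTensor A (LinearMap.mulRight R a) e

namespace IsSeparabilityIdempotent

variable {e : A ⊗[R] A}

def actionSection (he : IsSeparabilityIdempotent e) : M →ₗ[A] A ⊗[R] M where
  toFun m := LinearMap.lTensor A (LinearMap.id.smulRight m) e
  map_add' m m' := by
    have : (LinearMap.id : A →ₗ[R] A).smulRight (m + m') =
        LinearMap.id.smulRight m + LinearMap.id.smulRight m' := by
      ext x; simp
    rw [this, LinearMap.lTensor_add, LinearMap.add_apply]
  map_smul' a m := by
    have : (LinearMap.id : A →ₗ[R] A).smulRight (a • m) =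
        LinearMap.id.smulRight m ∘ₗ LinearMap.mulRight R a := by
      ext x; simp [mul_smul]
    rw [this, LinearMap.lTensor_comp, LinearMap.comp_apply,
      ← he.rTensor_mulLeft_eq_lTensor_mulRight, ← LinearMap.comp_apply,
      LinearMap.lTensor_comp_rTensor, ← LinearMap.rTensor_comp_lTensor, LinearMap.comp_apply,
      LinearMap.rTensor_mulLeft_apply, RingHom.id_apply]

theorem actionMap_comp_actionSection (he : IsSeparabilityIdempotent e) :
    actionMap M ∘ₗ he.actionSection = LinearMap.id := by
  ext m
  change actionMap M (LinearMap.lTensor A (LinearMap.id.smulRight m) e) = m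
  rw [actionMap_lTensor_smulRight, he.mul'_eq_one, one_smul]

theorem projective (he : IsSeparabilityIdempotent e) [Module.Projective R M] :
    Module.Projective A M :=
  Module.Projective.of_split he.actionSection (actionMap M) he.actionMap_comp_actionSection

end IsSeparabilityIdempotent

end Separable

section Main

variable {R : Type} [CommRing R] {A : Type} [Ring A] [Algebra R A]

theorem projDimLE_of_hasProjectiveDimensionLE {e : A ⊗[R] A} (he : IsSeparabilityIdempotent e)
    {N : Type} [AddCommGroup N] [Module R N] [Module A N] [IsScalarTower R A N] {k : ℕ}
    {P : ℕ → ModuleCat.{0} A} {d : ∀ n : ℕ, (P (n + 1) : Type) →ₗ[A] (P n : Type)}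
    {π : (P 0 : Type) →ₗ[A] N}
    (hP : ∀ n, @Module.Projective R _ (P n) _ (Module.compHom (P n) (algebraMap R A)))
    (hres : IsResolution d π) (hN : HasProjectiveDimensionLE (ModuleCat.of R N) k) :
    ProjDimLE A N k := by
  induction k generalizing N P with
  | zero =>
    have := (IsProjective.iff_projective N).2
      ((projective_iff_hasProjectiveDimensionLE_zero _).2 hN)
    have := he.projective (M := N)
    exact projDimLE_zero_of_projective
  | succ k ih =>
    let _ := Module.compHom (P 0) (algebraMap R A)
    have : IsScalarTower R A (P 0) := .of_algebraMap_smul fun _ _ => rfl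
    have := hP 0
    have hK : HasProjectiveDimensionLE (ModuleCat.of R (LinearMap.ker π)) k :=
      ((LinearMap.exact_subtype_ker_map π).hasProjectiveDimensionLE_succ_iff
        (i := (LinearMap.ker π).subtype.restrictScalars R) (f := π.restrictScalars R)
        (LinearMap.ker π).injective_subtype hres.surjective k).1 hN
    have := he.projective (M := P 0)
    exact projDimLE_succ_of_ker hres.surjective (ih (fun n => hP (n + 1)) hres.shift hK)

end Main

/-- Let `R` be a commutative ring and `A` an `R`-algebra such that the
multiplication map `μ : A ⊗_R A → A` admits an `A`-bimodule right inverse `σ`.  Let `N` be a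
left `A`-module and `k ≥ 0`.  If there is an exact complex `⋯ → P_1 → P_0 → N → 0` of left
`A`-modules in which every `P_n` is projective as an `R`-module (by restriction of scalars),
and if the projective dimension of `N` as an `R`-module is at most `k`, then the projective
dimension of `N` as a left `A`-module is at most `k`. -/
theorem projDim_le_of_relatively_homologically_trivial
    (R : Type) [CommRing R] (A : Type) [Ring A] [Algebra R A]
    (σ : A →ₗ[R] A ⊗[R] A)
    (hσ_splits : ∀ x : A, LinearMap.mul' R A (σ x) = x)
    (hσ_left : ∀ a x : A, σ (a * x) = LinearMap.rTensor A (LinearMap.mulLeft R a) (σ x))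
    (hσ_right : ∀ a x : A, σ (x * a) = LinearMap.lTensor A (LinearMap.mulRight R a) (σ x))
    (N : Type) [AddCommGroup N] [Module R N] [Module A N] [IsScalarTower R A N] (k : ℕ)
    (hres : ∃ (P : ℕ → ModuleCat.{0} A) (d : ∀ n : ℕ, (P (n + 1) : Type) →ₗ[A] (P n : Type))
        (π : (P 0 : Type) →ₗ[A] N),
        (∀ n, @Module.Projective R _ (P n) _ (Module.compHom (P n) (algebraMap R A))) ∧
        Function.Surjective π ∧
        (∀ x : P 0, π x = 0 ↔ ∃ y, d 0 y = x) ∧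
        (∀ (n : ℕ) (x : P (n + 1)), d n x = 0 ↔ ∃ y, d (n + 1) y = x))
    (hdim : ProjDimLE R N k) :
    ProjDimLE A N k := by
  have he : IsSeparabilityIdempotent (σ 1) :=
    { mul'_eq_one := hσ_splits 1
      rTensor_mulLeft_eq_lTensor_mulRight := fun a => by
        rw [← hσ_left, ← hσ_right, mul_one, one_mul] }
  obtain ⟨P, d, π, hP, hπ, hexact_zero, hexact_succ⟩ := hres
  exact projDimLE_of_hasProjectiveDimensionLE he hP ⟨hπ, hexact_zero, hexact_succ⟩
    hdim.hasProjectiveDimensionLE
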